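/- arXiv:2208.13778 — 2 statements merged into one kernel-verified Lean document; each statement's English description precedes it below -/
import Mathlib

section
/- Rosenblatt's first theorem. Let n ≥ 1 and let A and B be disjoint sets of binary vectors in Fin n → Bool. Then there exist a natural number m, hidden-layer weights W : Fin m → (Fin n → ℝ) and thresholds θ : Fin m → ℝ, output weights v : Fin m → ℝ and an output threshold τ ∈ ℝ, such that for every a ∈ A one has ∑ j, v j * H(∑ i, W j i * (a i : ℝ) - θ j) > τ, and for every b ∈ B one has ∑ j, v j * H(∑ i, W j i * (b i : ℝ) - θ j) < τ. That is, an elementary perceptron (a two-layer network of linear threshold units: a hidden layer of A-elements followed by one linear threshold R-element) can separate any two non-intersecting sets of binary images. -/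
/-!
Each binary image `p` gets its own hidden unit, with weight `+1` on the pixels where `p` is on,
`-1` where it is off, and threshold the number of on-pixels of `p`. On input `x` its activation
is minus the Hamming distance from `x` to `p`, so it fires exactly when `x = p`. With one such
"grandmother cell" per image, the output unit can assign any value to any image; giving the
images of `A` the value `1` and all others `-1` separates `A` from `B` at threshold `0`.
-/

/-- The Heaviside step function: `H t = 1` if `t ≥ 0` and `H t = 0` if `t < 0`. -/
noncomputable def heaviside (t : ℝ) : ℝ := if 0 ≤ t then 1 else 0

open Finset

noncomputable def perceptron {n m : ℕ} (W : Fin m → Fin n → ℝ) (θ v : Fin m → ℝ)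
    (x : Fin n → Bool) : ℝ :=
  ∑ j, v j * heaviside ((∑ i, W j i * (if x i = true then (1 : ℝ) else 0)) - θ j)

lemma heaviside_neg_natCast (k : ℕ) : heaviside (-k) = if k = 0 then 1 else 0 := by
  rcases Nat.eq_zero_or_pos k with rfl | hk
  · simp [heaviside]
  · have : -(k : ℝ) < 0 := by simpa using hk
    simp [heaviside, not_le.mpr this, hk.ne']

section Matching

variable {n : ℕ}

def matchWeights (p : Fin n → Bool) (i : Fin n) : ℝ := if p i then 1 else -1

def matchThreshold (p : Fin n → Bool) : ℝ := ∑ i, if p i then 1 else 0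

lemma matchActivation_eq_neg_hammingDist (p x : Fin n → Bool) :
    (∑ i, matchWeights p i * (if x i = true then (1 : ℝ) else 0)) - matchThreshold p
      = -(hammingDist x p : ℝ) := by
  have hdist : (hammingDist x p : ℝ) = ∑ i, if x i ≠ p i then 1 else 0 := by
    rw [hammingDist, card_filter]
    push_cast
    rfl
  rw [hdist, matchThreshold, ← sum_sub_distrib, ← sum_neg_distrib]
  refine sum_congr rfl fun i _ => ?_
  cases hp : p i <;> cases hx : x i <;> norm_num [matchWeights, hp, hx]

lemma heaviside_matchActivation (p x : Fin n → Bool) :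
    heaviside ((∑ i, matchWeights p i * (if x i = true then (1 : ℝ) else 0)) - matchThreshold p)
      = if x = p then 1 else 0 := by
  rw [matchActivation_eq_neg_hammingDist, heaviside_neg_natCast]
  simp only [hammingDist_eq_zero]

end Matching

theorem exists_perceptron_eq {n : ℕ} (g : (Fin n → Bool) → ℝ) :
    ∃ (m : ℕ) (W : Fin m → Fin n → ℝ) (θ v : Fin m → ℝ), ∀ x, perceptron W θ v x = g x := by
  let e := (Fintype.equivFin (Fin n → Bool)).symm
  refine ⟨_, fun j => matchWeights (e j), fun j => matchThreshold (e j), fun j => g (e j),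
    fun x => ?_⟩
  simp only [perceptron, heaviside_matchActivation]
  rw [e.sum_comp fun p => g p * if x = p then 1 else 0]
  simp

theorem rosenblatt_first_theorem_general
    (n : ℕ) (A B : Set (Fin n → Bool)) (hAB : Disjoint A B) :
    ∃ (m : ℕ) (W : Fin m → Fin n → ℝ) (θ : Fin m → ℝ) (v : Fin m → ℝ) (τ : ℝ),
      (∀ a ∈ A,
        (∑ j, v j * heaviside ((∑ i, W j i * (if a i = true then (1 : ℝ) else 0)) - θ j)) > τ) ∧
      (∀ b ∈ B,
        (∑ j, v j * heaviside ((∑ i, W j i * (if b i = true then (1 : ℝ) else 0)) - θ j)) < τ) := by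
  classical
  obtain ⟨m, W, θ, v, hg⟩ := exists_perceptron_eq fun x => if x ∈ A then (1 : ℝ) else -1
  refine ⟨m, W, θ, v, 0, fun a ha => ?_, fun b hb => ?_⟩
  · change perceptron W θ v a > 0
    simp [hg, ha]
  · change perceptron W θ v b < 0
    simp [hg, hAB.notMem_of_mem_right hb]

/-- Rosenblatt's first theorem: an elementary perceptron (a hidden
layer of linear threshold A-elements followed by one linear threshold R-element)
can separate any two non-intersecting sets of binary images. -/
theorem rosenblatt_first_theorem
    (n : ℕ) (hn : 1 ≤ n) (A B : Set (Fin n → Bool)) (hAB : Disjoint A B) :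
    ∃ (m : ℕ) (W : Fin m → Fin n → ℝ) (θ : Fin m → ℝ) (v : Fin m → ℝ) (τ : ℝ),
      (∀ a ∈ A,
        (∑ j, v j * heaviside ((∑ i, W j i * (if a i = true then (1 : ℝ) else 0)) - θ j)) > τ) ∧
      (∀ b ∈ B,
        (∑ j, v j * heaviside ((∑ i, W j i * (if b i = true then (1 : ℝ) else 0)) - θ j)) < τ) :=
  rosenblatt_first_theorem_general n A B hAB
end

section
/- Theorem (shallow network for the travel maze problem). Let n ≥ 1 and L ≥ 1, and set m = (n!)^L. There exist hidden-layer weights W : Fin m → (Fin L × Fin n × Fin n → ℝ) and thresholds θ : Fin m → ℝ, and 0-1 output weights V : Fin m → Matrix (Fin n) (Fin n) ℝ, such that for every L-tuple of permutations (σ_1, …, σ_L) of Fin n, feeding the entries of the stage permutation matrices (x^{(k)}_{i,j}) = (P_{σ_k})_{i,j} as the L n² inputs, the network output Z_{q,r} = ∑_{j : Fin m} (V j)_{q,r} * H(∑_{(k,i,i')} W j (k,i,i') * (P_{σ_k})_{i,i'} - θ j) equals the (q, r) entry of the product matrix P_{σ_1} * P_{σ_2} * ⋯ * P_{σ_L}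 for all q, r ∈ Fin n. Moreover, each hidden unit outputs 1 on exactly one L-tuple of permutations and 0 on all others. -/
/-- The real permutation matrix of `σ`: `(P_σ)_{i,j} = 1` if `σ i = j`, else `0`. -/
def permMatrix (n : ℕ) (σ : Equiv.Perm (Fin n)) : Matrix (Fin n) (Fin n) ℝ :=
  fun i j => if σ i = j then 1 else 0

lemma permMatrix_mul (n : ℕ) (σ τ : Equiv.Perm (Fin n)) :
    permMatrix n σ * permMatrix n τ = permMatrix n (τ * σ) := by
  ext i j
  rw [Matrix.mul_apply]
  rw [Finset.sum_eq_single (σ i)]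
  · simp [permMatrix]; congr
  · intro b _ hb
    simp [permMatrix, Ne.symm hb]
  · simp

lemma listProd_permMatrix (n : ℕ) (l : List (Equiv.Perm (Fin n))) :
    (l.map (permMatrix n)).prod = permMatrix n l.reverse.prod := by
  induction l with
  | nil => ext i j; simp [permMatrix, Matrix.one_apply]; congr
  | cons a l ih =>
      simp [ih, permMatrix_mul]

lemma key (n L : ℕ) (τ σ : Fin L → Equiv.Perm (Fin n)) :
    heaviside ((∑ t : Fin L × Fin n × Fin n,
        permMatrix n (τ t.1) t.2.1 t.2.2 * permMatrix n (σ t.1) t.2.1 t.2.2)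
        - ((L : ℝ) * n))
      = if σ = τ then 1 else 0 := by
  have hS : (∑ t : Fin L × Fin n × Fin n,
        permMatrix n (τ t.1) t.2.1 t.2.2 * permMatrix n (σ t.1) t.2.1 t.2.2)
      = ∑ p : Fin L × Fin n, (if τ p.1 p.2 = σ p.1 p.2 then (1:ℝ) else 0) := by
    have hinner : ∀ k : Fin L, ∀ i : Fin n,
        (∑ i' : Fin n, permMatrix n (τ k) i i' * permMatrix n (σ k) i i')
          = if τ k i = σ k i then (1:ℝ) else 0 := by
      intro k i
      rw [Finset.sum_eq_single (τ k i)]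
      · simp [permMatrix, eq_comm]
      · intro b _ hb
        simp [permMatrix, Ne.symm hb]
      · simp
    calc (∑ t : Fin L × Fin n × Fin n,
            permMatrix n (τ t.1) t.2.1 t.2.2 * permMatrix n (σ t.1) t.2.1 t.2.2)
        = ∑ k : Fin L, ∑ i : Fin n, ∑ i' : Fin n,
            permMatrix n (τ k) i i' * permMatrix n (σ k) i i' := by
          rw [Fintype.sum_prod_type (fun t : Fin L × Fin n × Fin n =>
            permMatrix n (τ t.1) t.2.1 t.2.2 * permMatrix n (σ t.1) t.2.1 t.2.2)]
          exact Finset.sum_congr rfl fun k _ =>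
            Fintype.sum_prod_type (fun p : Fin n × Fin n =>
              permMatrix n (τ k) p.1 p.2 * permMatrix n (σ k) p.1 p.2)
      _ = ∑ k : Fin L, ∑ i : Fin n, (if τ k i = σ k i then (1:ℝ) else 0) :=
          Finset.sum_congr rfl fun k _ => Finset.sum_congr rfl fun i _ => hinner k i
      _ = ∑ p : Fin L × Fin n, (if τ p.1 p.2 = σ p.1 p.2 then (1:ℝ) else 0) :=
          (Fintype.sum_prod_type (fun p : Fin L × Fin n => if τ p.1 p.2 = σ p.1 p.2 then (1:ℝ) else 0)).symm
  have hconst : (∑ _p : Fin L × Fin n, (1:ℝ)) = (L : ℝ) * n := by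
    simp [Finset.card_univ, mul_comm]
  by_cases h : σ = τ
  · subst h
    rw [hS]
    have h1 : (∑ p : Fin L × Fin n, if (σ p.1) p.2 = (σ p.1) p.2 then (1:ℝ) else 0)
        = (L:ℝ) * n := by
      rw [← hconst]; exact Finset.sum_congr rfl fun p _ => if_pos rfl
    rw [h1, sub_self]
    simp [heaviside]
  · have hlt : (∑ p : Fin L × Fin n, (if τ p.1 p.2 = σ p.1 p.2 then (1:ℝ) else 0))
        < ∑ _p : Fin L × Fin n, (1:ℝ) := by
      obtain ⟨k, hk⟩ : ∃ k, τ k ≠ σ k := by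
        by_contra hc
        push_neg at hc
        exact h (funext fun k => hc k).symm
      obtain ⟨i, hi⟩ : ∃ i, τ k i ≠ σ k i := by
        by_contra hc
        push_neg at hc
        exact hk (Equiv.ext hc)
      refine Finset.sum_lt_sum (fun p _ => ?_) ⟨(k, i), Finset.mem_univ _, ?_⟩
      · split <;> norm_num
      · simp [hi]
    rw [hS]
    have hneg : (∑ p : Fin L × Fin n, (if τ p.1 p.2 = σ p.1 p.2 then (1:ℝ) else 0))
        - (L:ℝ) * n < 0 := by
      rw [← hconst]; linarith
    unfold heaviside
    rw [if_neg (not_le.mpr hneg), if_neg h]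

/-- shallow network for the travel maze problem: for `n, L ≥ 1`
there exist hidden-layer weights and thresholds for `m = (n!)^L` linear threshold
A-elements over the `L n²` inputs (the entries of the stage permutation matrices),
and 0-1 output weights, such that on every `L`-tuple of stage permutations the
network outputs exactly the product matrix `P_{σ_1} * P_{σ_2} * ⋯ * P_{σ_L}`;
moreover each hidden unit outputs `1` on exactly one `L`-tuple of permutations
and `0` on all others. -/
theorem shallow_network_travel_maze
    (n L : ℕ) (hn : 1 ≤ n) (hL : 1 ≤ L) :
    ∃ (W : Fin (Nat.factorial n ^ L) → (Fin L × Fin n × Fin n → ℝ))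
      (θ : Fin (Nat.factorial n ^ L) → ℝ)
      (V : Fin (Nat.factorial n ^ L) → Matrix (Fin n) (Fin n) ℝ),
      (∀ (j : Fin (Nat.factorial n ^ L)) (q r : Fin n), V j q r = 0 ∨ V j q r = 1) ∧
      (∀ (σ : Fin L → Equiv.Perm (Fin n)) (q r : Fin n),
        (∑ j, V j q r *
            heaviside ((∑ t : Fin L × Fin n × Fin n,
              W j t * permMatrix n (σ t.1) t.2.1 t.2.2) - θ j))
          = ((List.ofFn (fun k => permMatrix n (σ k))).prod) q r) ∧
      (∀ j : Fin (Nat.factorial n ^ L),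
        ∃ σ₀ : Fin L → Equiv.Perm (Fin n),
          ∀ σ : Fin L → Equiv.Perm (Fin n),
            heaviside ((∑ t : Fin L × Fin n × Fin n,
                W j t * permMatrix n (σ t.1) t.2.1 t.2.2) - θ j)
              = if σ = σ₀ then 1 else 0) := by
  classical
  have hcard : Fintype.card (Fin L → Equiv.Perm (Fin n)) = Nat.factorial n ^ L := by
    simp [Fintype.card_fun, Fintype.card_perm]
  let e : Fin (Nat.factorial n ^ L) ≃ (Fin L → Equiv.Perm (Fin n)) :=
    (Fintype.equivFinOfCardEq hcard).symm
  refine ⟨fun j t => permMatrix n (e j t.1) t.2.1 t.2.2, fun _ => (L : ℝ) * n,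
    fun j => (List.ofFn (fun k => permMatrix n (e j k))).prod, ?_, ?_, ?_⟩
  · intro j q r
    dsimp only
    have : (List.ofFn (fun k => permMatrix n (e j k))).prod
        = permMatrix n ((List.ofFn (e j)).reverse.prod) := by
      rw [← listProd_permMatrix, List.map_ofFn]
      rfl
    rw [this]
    unfold permMatrix
    split <;> simp
  · intro σ q r
    dsimp only
    rw [Finset.sum_eq_single (e.symm σ)]
    · rw [key n L (e (e.symm σ)) σ]
      simp
    · intro j _ hj
      rw [key n L (e j) σ]
      have : σ ≠ e j := by
        intro hc
        apply hj
        rw [hc, Equiv.symm_apply_apply]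
      simp [this]
    · simp
  · intro j
    exact ⟨e j, fun σ => key n L (e j) σ⟩
end
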